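/- Assume Ξ = ℝ^m, the loss function ℓ : ℝ^m → ℝ is convex, p = 1, and P̂_N = (1/N) Σ_{i=1}^N δ_{ξ̂_i} is the empirical distribution on samples ξ̂_1, …, ξ̂_N ∈ ℝ^m. Then the worst-case risk over the type-1 Wasserstein ball equals the Lipschitz-regularized empirical loss: sup_{Q ∈ 𝔹_{ε,1}(P̂_N)} E^Q[ℓ(ξ)] = (1/N) Σ_{i=1}^N ℓ(ξ̂_i) + ε · Lip(ℓ), where Lip(ℓ) = sup_{ξ ≠ ξ'} |ℓ(ξ) − ℓ(ξ')| / ‖ξ − ξ'‖. -/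

import Mathlib

open MeasureTheory Filter
open scoped ENNReal NNReal BigOperators Classical Matrix

noncomputable section

namespace WDro

variable {m : ℕ}

/-- Axioms for an abstract norm `nrm` on `ℝ^m`. -/
structure IsNorm (nrm : (Fin m → ℝ) → ℝ) : Prop where
  eq_zero_iff : ∀ x, nrm x = 0 ↔ x = 0
  triangle : ∀ x y, nrm (x + y) ≤ nrm x + nrm y
  homog : ∀ (c : ℝ) (x : Fin m → ℝ), nrm (c • x) = |c| * nrm x

/-- The Euclidean norm on `ℝ^m`. -/
def eucNorm (x : Fin m → ℝ) : ℝ := Real.sqrt (x ⬝ᵥ x)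

/-- The dual norm `‖z‖_* = sup_{‖ξ‖ ≤ 1} z^⊤ ξ`. -/
def dualNorm (nrm : (Fin m → ℝ) → ℝ) (z : Fin m → ℝ) : ℝ :=
  sSup {r : ℝ | ∃ ξ : Fin m → ℝ, nrm ξ ≤ 1 ∧ r = z ⬝ᵥ ξ}

/-- The set of couplings of `Q` and `Q'`: joint distributions with the given marginals. -/
def Couplings {α : Type*} [MeasurableSpace α] (Q Q' : Measure α) : Set (Measure (α × α)) :=
  {π | IsProbabilityMeasure π ∧ π.map Prod.fst = Q ∧ π.map Prod.snd = Q'}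

/-- The type-`p` Wasserstein distance with transportation cost `nrm (ξ - ξ') ^ p`. -/
def Wp (nrm : (Fin m → ℝ) → ℝ) (p : ℝ) (Q Q' : Measure (Fin m → ℝ)) : ℝ≥0∞ :=
  (⨅ π ∈ Couplings Q Q', ∫⁻ ξ, ENNReal.ofReal (nrm (ξ.1 - ξ.2) ^ p) ∂π) ^ (1 / p)

/-- The type-`p` Wasserstein ball of radius `ε` around `P`, within distributions on `Ξ`. -/
def WBall (nrm : (Fin m → ℝ) → ℝ) (p ε : ℝ) (Ξ : Set (Fin m → ℝ))
    (P : Measure (Fin m → ℝ)) : Set (Measure (Fin m → ℝ)) :=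
  {Q | IsProbabilityMeasure Q ∧ Q Ξᶜ = 0 ∧ Wp nrm p Q P ≤ ENNReal.ofReal ε}

/-- Positive part of an extended real number, as an extended nonnegative real. -/
def epos (x : EReal) : ℝ≥0∞ := if x = ⊤ then ⊤ else ENNReal.ofReal x.toReal

/-- Canonical map from `ℝ≥0∞` to `EReal`. -/
def ennToE (x : ℝ≥0∞) : EReal := if x = ⊤ then ⊤ else ((x.toReal : ℝ) : EReal)

/-- Expectation of an extended-real-valued loss under `Q`, with the convention that the
expectation is `+∞` whenever the positive part has infinite integral. -/
def eexp {α : Type*} [MeasurableSpace α] (Q : Measure α) (ℓ : α → EReal) : EReal :=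
  if (∫⁻ x, epos (ℓ x) ∂Q) = ⊤ then ⊤
  else if (∫⁻ x, epos (-(ℓ x)) ∂Q) = ⊤ then ⊥
  else (((∫⁻ x, epos (ℓ x) ∂Q).toReal - (∫⁻ x, epos (-(ℓ x)) ∂Q).toReal : ℝ) : EReal)

/-- Integrability of an extended-real-valued loss under `Q`. -/
def IntegrableE {α : Type*} [MeasurableSpace α] (Q : Measure α) (ℓ : α → EReal) : Prop :=
  Measurable ℓ ∧ (∫⁻ x, epos (ℓ x) ∂Q) ≠ ⊤ ∧ (∫⁻ x, epos (-(ℓ x)) ∂Q) ≠ ⊤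

/-- Lipschitz modulus of an extended-real-valued function with respect to `nrm`. -/
def lipModE (nrm : (Fin m → ℝ) → ℝ) (ℓ : (Fin m → ℝ) → EReal) : ℝ≥0∞ :=
  ⨆ (x : Fin m → ℝ) (y : Fin m → ℝ) (_ : x ≠ y),
    epos (ℓ x - ℓ y) / ENNReal.ofReal (nrm (x - y))

/-- Lipschitz modulus of a real-valued function with respect to `nrm`. -/
def lipMod (nrm : (Fin m → ℝ) → ℝ) (φ : (Fin m → ℝ) → ℝ) : ℝ≥0∞ :=
  ⨆ (x : Fin m → ℝ) (y : Fin m → ℝ) (_ : x ≠ y),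
    ENNReal.ofReal (|φ x - φ y| / nrm (x - y))

/-- The empirical distribution on `N` samples. -/
def empirical (N : ℕ) (xs : Fin N → (Fin m → ℝ)) : Measure (Fin m → ℝ) :=
  (N : ℝ≥0∞)⁻¹ • ∑ i, Measure.dirac (xs i)

/-- The mean vector of a distribution on `ℝ^m`. -/
def meanVec (Q : Measure (Fin m → ℝ)) : Fin m → ℝ := fun i => ∫ x, x i ∂Q

/-- The covariance matrix of a distribution on `ℝ^m`. -/
def covMatrix (Q : Measure (Fin m → ℝ)) : Matrix (Fin m) (Fin m) ℝ :=
  Matrix.of fun i j => ∫ x, (x i - meanVec Q i) * (x j - meanVec Q j) ∂Q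

/-- The positive semidefinite square root of a matrix (junk value `0` off the PSD cone). -/
def psdSqrt (A : Matrix (Fin m) (Fin m) ℝ) : Matrix (Fin m) (Fin m) ℝ :=
  if h : A.PosSemidef then h.1.cfc Real.sqrt else 0

/-- The mean-covariance uncertainty set `𝒰_ε(μ̂, Σ̂)`. -/
def Uset (ε : ℝ) (muh : Fin m → ℝ) (Sh : Matrix (Fin m) (Fin m) ℝ) :
    Set ((Fin m → ℝ) × Matrix (Fin m) (Fin m) ℝ) :=
  {p | p.2.PosSemidef ∧
    eucNorm (muh - p.1) ^ 2 +
      (Sh + p.2 - (2 : ℝ) • psdSqrt (psdSqrt Sh * p.2 * psdSqrt Sh)).trace ≤ ε ^ 2}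

/-- The first- and second-order moment uncertainty set `𝒱_ε(μ̂, Σ̂)`. -/
def Vset (ε : ℝ) (muh : Fin m → ℝ) (Sh : Matrix (Fin m) (Fin m) ℝ) :
    Set ((Fin m → ℝ) × Matrix (Fin m) (Fin m) ℝ) :=
  {p | p.2.PosSemidef ∧ (p.1, p.2 - Matrix.vecMulVec p.1 p.1) ∈ Uset ε muh Sh}

/-- The Gelbrich hull `𝔾_ε(μ̂, Σ̂)` of distributions on `Ξ`. -/
def GHull (ε : ℝ) (muh : Fin m → ℝ) (Sh : Matrix (Fin m) (Fin m) ℝ)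
    (Ξ : Set (Fin m → ℝ)) : Set (Measure (Fin m → ℝ)) :=
  {Q | IsProbabilityMeasure Q ∧ Q Ξᶜ = 0 ∧ Integrable (fun x => x ⬝ᵥ x) Q ∧
    (meanVec Q, covMatrix Q) ∈ Uset ε muh Sh}

/-- `Q` is the elliptical distribution `ℰ_g(μ, Σ)`. -/
def IsElliptical (g : ℝ → ℝ) (mu : Fin m → ℝ) (Sh : Matrix (Fin m) (Fin m) ℝ)
    (Q : Measure (Fin m → ℝ)) : Prop :=
  IsProbabilityMeasure Q ∧ (∀ u : ℝ, 0 ≤ u → 0 ≤ g u) ∧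
    Integrable (fun x => x ⬝ᵥ x) Q ∧ meanVec Q = mu ∧ covMatrix Q = Sh ∧
    ∃ C : ℝ, 0 < C ∧
      Q = volume.withDensity
        (fun ξ => ENNReal.ofReal (C * (Sh.det)⁻¹ * g ((ξ - mu) ⬝ᵥ (Sh⁻¹).mulVec (ξ - mu))))

/-- The symmetric block matrix `[[A, b], [bᵀ, c]]`. -/
def blockM (A : Matrix (Fin m) (Fin m) ℝ) (b : Fin m → ℝ) (c : ℝ) :
    Matrix (Fin m ⊕ Unit) (Fin m ⊕ Unit) ℝ :=
  Matrix.fromBlocks A (Matrix.of fun i (_ : Unit) => b i)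
    (Matrix.of fun (_ : Unit) j => b j) (Matrix.of fun (_ : Unit) (_ : Unit) => c)

/-- The largest eigenvalue of a (symmetric) matrix. -/
def lambdaMax (Q : Matrix (Fin m) (Fin m) ℝ) : ℝ :=
  sSup {r : ℝ | ∃ v : Fin m → ℝ, v ≠ 0 ∧ Q.mulVec v = r • v}

/-- Convexity of an extended-real-valued function. -/
def ConvexE (f : (Fin m → ℝ) → EReal) : Prop :=
  ∀ x y : Fin m → ℝ, ∀ t : ℝ, 0 ≤ t → t ≤ 1 →
    f (t • x + (1 - t) • y) ≤ (t : EReal) * f x + ((1 - t : ℝ) : EReal) * f y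

/-- The convex conjugate of an extended-real-valued function. -/
def conjE (f : (Fin m → ℝ) → EReal) (z : Fin m → ℝ) : EReal :=
  ⨆ ξ : Fin m → ℝ, (((z ⬝ᵥ ξ) : ℝ) : EReal) - f ξ

/-- The support function of a set `Ξ ⊆ ℝ^m`. -/
def suppFnE (Ξ : Set (Fin m → ℝ)) (z : Fin m → ℝ) : EReal :=
  ⨆ ξ : Ξ, (((z ⬝ᵥ (ξ : Fin m → ℝ)) : ℝ) : EReal)

/-- The constant `φ(q) = (q-1)^(q-1)/q^q` for `q > 1` and `φ(1) = 1`. -/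
def phiq (q : ℝ) : ℝ := if q = 1 then 1 else (q - 1) ^ (q - 1) / q ^ q

/-- The term `φ(q) γ ‖u/γ‖_*^q`, with the limiting convention at `γ = 0`. -/
def perspDual (nrm : (Fin m → ℝ) → ℝ) (q γ : ℝ) (u : Fin m → ℝ) : EReal :=
  if γ = 0 then (if q = 1 then ((dualNorm nrm u : ℝ) : EReal) else if u = 0 then 0 else ⊤)
  else ((phiq q * (γ * dualNorm nrm (γ⁻¹ • u) ^ q) : ℝ) : EReal)

/-- The perspective `α ‖θ/α‖^p` of the `p`-th power of the norm, with the limiting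
convention `0 ‖θ/0‖^p = lim_{α ↓ 0} α ‖θ/α‖^p`. -/
def perspNorm (nrm : (Fin m → ℝ) → ℝ) (p : ℝ) (θ : Fin m → ℝ) (α : ℝ) : EReal :=
  if α = 0 then (if p = 1 then ((nrm θ : ℝ) : EReal) else if θ = 0 then 0 else ⊤)
  else ((α * nrm (α⁻¹ • θ) ^ p : ℝ) : EReal)

/-- The perspective `α f(x + θ/α)` of a loss, defined at `α = 0` as the value making it
upper semicontinuous there (the limit superior from `α > 0`). -/
def perspLoss (f : (Fin m → ℝ) → EReal) (x θ : Fin m → ℝ) (α : ℝ) : EReal :=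
  if α = 0 then
    Filter.limsup
      (fun pr : (Fin m → ℝ) × ℝ => (pr.2 : EReal) * f (x + pr.2⁻¹ • pr.1))
      ((nhds θ) ×ˢ (nhdsWithin 0 (Set.Ioi (0 : ℝ))))
  else (α : EReal) * f (x + α⁻¹ • θ)

/-- The recession cone of a set `Ξ ⊆ ℝ^m`. -/
def recessionCone (Ξ : Set (Fin m → ℝ)) : Set (Fin m → ℝ) :=
  {θ | ∀ ξ ∈ Ξ, ∀ t : ℝ, 0 ≤ t → ξ + t • θ ∈ Ξ}

/-- The constraint `x + θ/α ∈ Ξ`, interpreted at `α = 0` as membership of `θ` in the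
recession cone of `Ξ`. -/
def perspMem (Ξ : Set (Fin m → ℝ)) (x θ : Fin m → ℝ) (α : ℝ) : Prop :=
  if α = 0 then θ ∈ recessionCone Ξ else x + α⁻¹ • θ ∈ Ξ

/-- The standard Gaussian distribution on `ℝ^m`. -/
def stdGaussianPi (m : ℕ) : Measure (Fin m → ℝ) :=
  Measure.pi fun _ => ProbabilityTheory.gaussianReal 0 1

/-- The (possibly degenerate) normal distribution `𝒩(μ̂, Σ̂)` on `ℝ^m`. -/
def mvNormal (muh : Fin m → ℝ) (Sh : Matrix (Fin m) (Fin m) ℝ) : Measure (Fin m → ℝ) :=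
  (stdGaussianPi m).map (fun z => muh + (psdSqrt Sh).mulVec z)

/-- `- log det X`, valued `+∞` when `det X ≤ 0`. -/
def negLogDet (X : Matrix (Fin m) (Fin m) ℝ) : EReal :=
  if X.det ≤ 0 then ⊤ else ((-Real.log X.det : ℝ) : EReal)

/-- The hinge loss. -/
def hingeLoss (z : ℝ) : ℝ := max 0 (1 - z)

/-- The smooth hinge loss. -/
def smoothHingeLoss (z : ℝ) : ℝ :=
  if z ≤ 0 then 1 / 2 - z else if z < 1 then (1 - z) ^ 2 / 2 else 0

/-- The logloss. -/
def logLoss (z : ℝ) : ℝ := Real.log (1 + Real.exp (-z))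

/-- The input-output transportation cost with `κ = ∞`: moving mass between points with
different outputs is infinitely expensive. -/
def classDist (n : ℕ) (nrm : (Fin n → ℝ) → ℝ) (a b : (Fin n → ℝ) × ℝ) : ℝ≥0∞ :=
  if a.2 = b.2 then ENNReal.ofReal (nrm (a.1 - b.1)) else ⊤

/-- The type-1 Wasserstein distance on the input-output space for the cost `classDist`. -/
def W1class (n : ℕ) (nrm : (Fin n → ℝ) → ℝ) (Q Q' : Measure ((Fin n → ℝ) × ℝ)) : ℝ≥0∞ :=
  ⨅ π ∈ Couplings Q Q', ∫⁻ pr, classDist n nrm pr.1 pr.2 ∂π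

/-- The type-1 Wasserstein ball on the input-output space `ℝ^n × {-1, +1}`. -/
def classBall (n : ℕ) (nrm : (Fin n → ℝ) → ℝ) (ε : ℝ) (P : Measure ((Fin n → ℝ) × ℝ)) :
    Set (Measure ((Fin n → ℝ) × ℝ)) :=
  {Q | IsProbabilityMeasure Q ∧
    Q ({ξ : (Fin n → ℝ) × ℝ | ξ.2 = 1 ∨ ξ.2 = -1})ᶜ = 0 ∧
    W1class n nrm Q P ≤ ENNReal.ofReal ε}

/-- The empirical distribution on `N` labeled samples. -/
def empiricalClass (n N : ℕ) (xs : Fin N → (Fin n → ℝ)) (ys : Fin N → ℝ) :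
    Measure ((Fin n → ℝ) × ℝ) :=
  (N : ℝ≥0∞)⁻¹ • ∑ i, Measure.dirac (xs i, ys i)

/-- The distributionally robust maximum likelihood objective. -/
def mleObj (ε : ℝ) (muh : Fin m → ℝ) (Sh : Matrix (Fin m) (Fin m) ℝ)
    (mu : Fin m → ℝ) (X : Matrix (Fin m) (Fin m) ℝ) : EReal :=
  negLogDet X +
    ⨆ Q : (WBall eucNorm 2 ε Set.univ (mvNormal muh Sh)),
      eexp Q.1 (fun ξ => (((ξ - mu) ⬝ᵥ X.mulVec (ξ - mu) : ℝ) : EReal))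

end WDro
namespace WDro

/-!
Upper bound: a coupling of `Q` with `P` of cost at most `ε + δ` gives
`E_Q ℓ ≤ E_P ℓ + Lip(ℓ) (ε + δ)`. This says nothing when `ε = 0` and `Lip(ℓ) = ∞`; there,
Markov's inequality for such couplings shows that `Q` charges every atom of the finitely
supported `P` at least as much as `P` does, so `Q = P`.

Lower bound: move a fraction `t` of the mass of `P` to a point `w + c (u - w)` far out on a ray.
The transport cost grows like `t c ‖u - w‖`, while convexity makes the loss grow at least like
`c (ℓ u - ℓ w)`; with `t c ‖u - w‖ ≈ ε` the gain tends to `ε (ℓ u - ℓ w) / ‖u - w‖`, and these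
slopes have supremum `Lip(ℓ)`.
-/

section Norm

variable {m : ℕ} {nrm : (Fin m → ℝ) → ℝ}

lemma IsNorm.map_zero (h : IsNorm nrm) : nrm 0 = 0 :=
  (h.eq_zero_iff 0).2 rfl

lemma IsNorm.map_neg (h : IsNorm nrm) (x : Fin m → ℝ) : nrm (-x) = nrm x := by
  rw [← neg_one_smul ℝ x, h.homog, abs_neg, abs_one, one_mul]

lemma IsNorm.map_sub_rev (h : IsNorm nrm) (x y : Fin m → ℝ) : nrm (x - y) = nrm (y - x) := by
  rw [← neg_sub, h.map_neg]

lemma IsNorm.nonneg (h : IsNorm nrm) (x : Fin m → ℝ) : 0 ≤ nrm x := by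
  have := h.triangle x (-x)
  rw [add_neg_cancel, h.map_zero, h.map_neg] at this
  linarith

lemma IsNorm.pos (h : IsNorm nrm) {x : Fin m → ℝ} (hx : x ≠ 0) : 0 < nrm x :=
  (h.nonneg x).lt_of_ne' (mt (h.eq_zero_iff x).1 hx)

lemma IsNorm.convexOn (h : IsNorm nrm) : ConvexOn ℝ Set.univ nrm := by
  refine ⟨convex_univ, fun x _ y _ a b ha hb _ => ?_⟩
  calc nrm (a • x + b • y) ≤ nrm (a • x) + nrm (b • y) := h.triangle _ _
    _ = a * nrm x + b * nrm y := by rw [h.homog, h.homog, abs_of_nonneg ha, abs_of_nonneg hb]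

lemma IsNorm.continuous (h : IsNorm nrm) : Continuous nrm :=
  continuousOn_univ.1 (h.convexOn.continuousOn isOpen_univ)

end Norm

section Empirical

variable {m N : ℕ}

lemma isProbabilityMeasure_empirical (hN : 0 < N) (xs : Fin N → (Fin m → ℝ)) :
    IsProbabilityMeasure (empirical N xs) := by
  constructor
  simp [empirical, ENNReal.inv_mul_cancel, hN.ne']

lemma empirical_compl_image_eq_zero (xs : Fin N → (Fin m → ℝ)) :
    empirical N xs (↑(Finset.univ.image xs))ᶜ = 0 := by
  simp [empirical]

lemma integrable_empirical (hN : 0 < N) (xs : Fin N → (Fin m → ℝ)) {f : (Fin m → ℝ) → ℝ} :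
    Integrable f (empirical N xs) :=
  (integrable_finsetSum_measure.2 fun i _ => integrable_dirac enorm_lt_top).smul_measure
    (by simp [hN.ne'])

lemma integral_empirical (xs : Fin N → (Fin m → ℝ)) (f : (Fin m → ℝ) → ℝ) :
    ∫ x, f x ∂(empirical N xs) = (N : ℝ)⁻¹ * ∑ i, f (xs i) := by
  rw [empirical, integral_smul_measure,
    integral_finsetSum_measure fun i _ => integrable_dirac enorm_lt_top]
  simp [integral_dirac]

end Empirical

section ExtendedReal

lemma eexp_coe_of_integrable {α : Type*} [MeasurableSpace α] {Q : Measure α} {f : α → ℝ}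
    (hf : Integrable f Q) :
    eexp Q (fun x => ((f x : ℝ) : EReal)) = ((∫ x, f x ∂Q : ℝ) : EReal) := by
  have hpos : (∫⁻ x, ENNReal.ofReal (f x) ∂Q) ≠ ⊤ :=
    (lintegral_ofReal_le_lintegral_enorm f).trans_lt hf.2 |>.ne
  have hneg : (∫⁻ x, ENNReal.ofReal (-f x) ∂Q) ≠ ⊤ :=
    (lintegral_ofReal_le_lintegral_enorm _).trans_lt hf.neg.2 |>.ne
  simp only [eexp, epos, EReal.coe_ne_top, ← EReal.coe_neg, if_false, EReal.toReal_coe]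
  rw [if_neg hpos, if_neg hneg, integral_eq_lintegral_pos_part_sub_lintegral_neg_part hf]

lemma ennToE_eq_coe (x : ℝ≥0∞) : ennToE x = (x : EReal) := by
  by_cases hx : x = ⊤
  · simp [ennToE, hx]
  · simp [ennToE, hx, EReal.coe_ennreal_toReal hx]

lemma coe_add_ennToE_ofReal_mul_le {a ε : ℝ} {L : ℝ≥0∞} {S : EReal} (hε : 0 < ε)
    (ha : (a : EReal) ≤ S) (h : ∀ g : ℝ, ENNReal.ofReal g < L → ((a + ε * g : ℝ) : EReal) ≤ S) :
    (a : EReal) + ennToE (ENNReal.ofReal ε * L) ≤ S := by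
  rw [ennToE_eq_coe]
  refine EReal.add_le_of_forall_lt fun a' ha' b' hb' => ?_
  rcases le_or_gt b' 0 with hb0 | hb0
  · simpa using (add_le_add ha'.le hb0).trans (by simpa using ha)
  obtain ⟨r, rfl⟩ : ∃ r : ℝ, (r : EReal) = b' :=
    ⟨b'.toReal, EReal.coe_toReal (ne_top_of_lt hb') (ne_bot_of_gt hb0)⟩
  have hr : 0 < r := EReal.coe_pos.1 hb0
  have hrL : ENNReal.ofReal r < ENNReal.ofReal ε * L := by
    rwa [← EReal.coe_ennreal_lt_coe_ennreal_iff, EReal.coe_ennreal_ofReal, max_eq_left hr.le]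
  have hgL : ENNReal.ofReal (r / ε) < L := by
    rwa [ENNReal.ofReal_div_of_pos hε, ENNReal.div_lt_iff (by simp [hε]) (by simp), mul_comm]
  calc (a' + r : EReal) ≤ ((a + ε * (r / ε) : ℝ) : EReal) := by
        rw [mul_div_cancel₀ r hε.ne', EReal.coe_add]
        exact add_le_add ha'.le le_rfl
    _ ≤ S := h _ hgL

end ExtendedReal

section LipschitzModulus

variable {m : ℕ} {nrm : (Fin m → ℝ) → ℝ} {φ : (Fin m → ℝ) → ℝ}

lemma abs_sub_le_lipMod_toReal_mul (hnrm : IsNorm nrm) (hL : lipMod nrm φ ≠ ⊤)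
    (x y : Fin m → ℝ) : |φ x - φ y| ≤ (lipMod nrm φ).toReal * nrm (x - y) := by
  rcases eq_or_ne x y with rfl | hxy
  · simp [hnrm.map_zero]
  have hpos : 0 < nrm (x - y) := hnrm.pos (sub_ne_zero.2 hxy)
  have hle : ENNReal.ofReal (|φ x - φ y| / nrm (x - y)) ≤ lipMod nrm φ :=
    le_iSup_of_le x <| le_iSup_of_le y <| le_iSup_of_le hxy le_rfl
  rwa [ENNReal.ofReal_le_iff_le_toReal hL, div_le_iff₀ hpos] at hle

lemma exists_lt_slope_of_ofReal_lt_lipMod (hnrm : IsNorm nrm) {g : ℝ}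
    (hg : ENNReal.ofReal g < lipMod nrm φ) :
    ∃ u w, u ≠ w ∧ g < (φ u - φ w) / nrm (u - w) := by
  simp only [lipMod, lt_iSup_iff] at hg
  obtain ⟨x, y, hxy, hlt⟩ := hg
  have hslope := ((ENNReal.ofReal_lt_ofReal_iff').1 hlt).1
  rcases le_total (φ y) (φ x) with hle | hle
  · exact ⟨x, y, hxy, by rwa [abs_of_nonneg (sub_nonneg.2 hle)] at hslope⟩
  · refine ⟨y, x, hxy.symm, ?_⟩
    rwa [abs_of_nonpos (sub_nonpos.2 hle), neg_sub, hnrm.map_sub_rev] at hslope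

end LipschitzModulus

open Topology

section Transport

variable {m : ℕ} {nrm : (Fin m → ℝ) → ℝ} {Q P : Measure (Fin m → ℝ)}
  {π : Measure ((Fin m → ℝ) × (Fin m → ℝ))}

def transportCost (nrm : (Fin m → ℝ) → ℝ) (π : Measure ((Fin m → ℝ) × (Fin m → ℝ))) : ℝ≥0∞ :=
  ∫⁻ p, ENNReal.ofReal (nrm (p.1 - p.2)) ∂π

lemma Wp_one_eq_iInf_transportCost :
    Wp nrm 1 Q P = ⨅ π ∈ Couplings Q P, transportCost nrm π := by
  simp [Wp, transportCost]

lemma exists_coupling_transportCost_lt {r : ℝ≥0∞} (h : Wp nrm 1 Q P < r) :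
    ∃ π ∈ Couplings Q P, transportCost nrm π < r := by
  simpa only [Wp_one_eq_iInf_transportCost, iInf_lt_iff, exists_prop] using h

lemma IsNorm.measurable_cost (hnrm : IsNorm nrm) :
    Measurable fun p : (Fin m → ℝ) × (Fin m → ℝ) => nrm (p.1 - p.2) :=
  hnrm.continuous.measurable.comp (measurable_fst.sub measurable_snd)

lemma integral_le_integral_add_of_coupling (hnrm : IsNorm nrm) (hπ : π ∈ Couplings Q P)
    {ℓ : (Fin m → ℝ) → ℝ} {Lr : ℝ} (hℓ : Measurable ℓ)
    (hlip : ∀ x y, |ℓ x - ℓ y| ≤ Lr * nrm (x - y)) (hℓP : Integrable ℓ P)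
    (hcost : transportCost nrm π ≠ ⊤) :
    Integrable ℓ Q ∧ ∫ x, ℓ x ∂Q ≤ ∫ x, ℓ x ∂P + Lr * (transportCost nrm π).toReal := by
  obtain ⟨-, hfst, hsnd⟩ := hπ
  have hcost_int : Integrable (fun p => nrm (p.1 - p.2)) π :=
    ⟨hnrm.measurable_cost.aestronglyMeasurable,
      (hasFiniteIntegral_iff_ofReal (ae_of_all _ fun p => hnrm.nonneg _)).2 hcost.lt_top⟩
  have hsnd_int : Integrable (fun p => ℓ p.2) π := by
    rw [← hsnd] at hℓP
    exact hℓP.comp_measurable measurable_snd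
  have hbound_int := hsnd_int.add (hcost_int.const_mul Lr)
  have hfst_int : Integrable (fun p => ℓ p.1) π := by
    refine (hsnd_int.abs.add (hcost_int.const_mul Lr)).mono'
      (hℓ.comp measurable_fst).aestronglyMeasurable (ae_of_all _ fun p => ?_)
    rw [Real.norm_eq_abs, Pi.add_apply]
    linarith [hlip p.1 p.2, abs_sub_abs_le_abs_sub (ℓ p.1) (ℓ p.2)]
  refine ⟨by rw [← hfst]; exact (integrable_map_measure hℓ.aestronglyMeasurable
    measurable_fst.aemeasurable).2 hfst_int, ?_⟩
  calc ∫ x, ℓ x ∂Q = ∫ p, ℓ p.1 ∂π := by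
        rw [← hfst, integral_map measurable_fst.aemeasurable hℓ.aestronglyMeasurable]
    _ ≤ ∫ p, (ℓ p.2 + Lr * nrm (p.1 - p.2)) ∂π :=
        integral_mono hfst_int hbound_int fun p => by
          linarith [hlip p.1 p.2, le_abs_self (ℓ p.1 - ℓ p.2)]
    _ = ∫ x, ℓ x ∂P + Lr * (transportCost nrm π).toReal := by
        rw [integral_add hsnd_int (hcost_int.const_mul Lr), integral_const_mul, ← hsnd,
          integral_map measurable_snd.aemeasurable hℓ.aestronglyMeasurable,
          integral_eq_lintegral_of_nonneg_ae (ae_of_all _ fun p => hnrm.nonneg _)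
            hnrm.measurable_cost.aestronglyMeasurable, transportCost]

lemma integral_le_integral_add_of_mem_WBall (hnrm : IsNorm nrm) {ε : ℝ} (hε : 0 ≤ ε)
    {Ξ : Set (Fin m → ℝ)} (hQ : Q ∈ WBall nrm 1 ε Ξ P) {ℓ : (Fin m → ℝ) → ℝ} {Lr : ℝ}
    (hℓ : Measurable ℓ) (hLr : 0 ≤ Lr) (hlip : ∀ x y, |ℓ x - ℓ y| ≤ Lr * nrm (x - y))
    (hℓP : Integrable ℓ P) :
    Integrable ℓ Q ∧ ∫ x, ℓ x ∂Q ≤ ∫ x, ℓ x ∂P + Lr * ε := by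
  have hslack : ∀ δ > 0, Integrable ℓ Q ∧ ∫ x, ℓ x ∂Q ≤ ∫ x, ℓ x ∂P + Lr * (ε + δ) := by
    intro δ hδ
    obtain ⟨π, hπ, hlt⟩ := exists_coupling_transportCost_lt
      (hQ.2.2.trans_lt ((ENNReal.ofReal_lt_ofReal_iff (by linarith)).2
        (lt_add_of_pos_right ε hδ)))
    obtain ⟨hint, hle⟩ := integral_le_integral_add_of_coupling hnrm hπ hℓ hlip hℓP hlt.ne_top
    refine ⟨hint, hle.trans ?_⟩
    gcongr
    exact ENNReal.toReal_le_of_le_ofReal (by linarith) hlt.le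
  have hlim : Tendsto (fun δ => ∫ x, ℓ x ∂P + Lr * (ε + δ)) (𝓝[>] 0)
      (𝓝 (∫ x, ℓ x ∂P + Lr * ε)) := by
    have hcont : Continuous fun δ => ∫ x, ℓ x ∂P + Lr * (ε + δ) := by fun_prop
    simpa using (hcont.tendsto 0).mono_left nhdsWithin_le_nhds
  exact ⟨(hslack 1 one_pos).1,
    ge_of_tendsto hlim (eventually_nhdsWithin_of_forall fun δ hδ => (hslack δ hδ).2)⟩

end Transport

section ZeroDistance

variable {m : ℕ} {nrm : (Fin m → ℝ) → ℝ} {Q P : Measure (Fin m → ℝ)}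

lemma measure_singleton_le_add_of_coupling (hnrm : IsNorm nrm)
    {π : Measure ((Fin m → ℝ) × (Fin m → ℝ))} (hπ : π ∈ Couplings Q P) (v : Fin m → ℝ)
    {η : ℝ} (hη : 0 < η) :
    P {v} ≤ Q {u | nrm (u - v) ≤ η} + transportCost nrm π / ENNReal.ofReal η := by
  obtain ⟨-, hfst, hsnd⟩ := hπ
  have hball : MeasurableSet {u | nrm (u - v) ≤ η} :=
    measurableSet_le (hnrm.continuous.measurable.comp (measurable_id.sub_const v))
      measurable_const
  calc P {v} = π (Prod.snd ⁻¹' {v}) := by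
        rw [← hsnd, Measure.map_apply measurable_snd (measurableSet_singleton v)]
    _ ≤ π (Prod.fst ⁻¹' {u | nrm (u - v) ≤ η})
          + π {p | ENNReal.ofReal η ≤ ENNReal.ofReal (nrm (p.1 - p.2))} := by
        refine (measure_mono fun p (hp : p ∈ Prod.snd ⁻¹' {v}) => ?_).trans
          (measure_union_le _ _)
        rcases le_total (nrm (p.1 - p.2)) η with h | h
        · exact Or.inl (show nrm (p.1 - v) ≤ η from Set.mem_singleton_iff.1 hp ▸ h)
        · exact Or.inr (ENNReal.ofReal_le_ofReal h)
    _ ≤ Q {u | nrm (u - v) ≤ η} + transportCost nrm π / ENNReal.ofReal η := by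
        rw [← hfst, Measure.map_apply measurable_fst hball]
        gcongr
        exact meas_ge_le_lintegral_div hnrm.measurable_cost.ennreal_ofReal.aemeasurable
          (by simpa using hη) ENNReal.ofReal_ne_top

lemma IsNorm.iInter_closedBall_eq_singleton (hnrm : IsNorm nrm) (v : Fin m → ℝ) :
    ⋂ η > 0, {u | nrm (u - v) ≤ η} = {v} := by
  ext u
  simp only [Set.mem_iInter, Set.mem_ofPred_eq, Set.mem_singleton_iff]
  refine ⟨fun h => ?_, fun h η hη => by simp [h, hnrm.map_zero, hη.le]⟩
  have hle : nrm (u - v) ≤ 0 := le_of_forall_pos_le_add fun η hη => by simpa using h η hη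
  exact sub_eq_zero.1 ((hnrm.eq_zero_iff _).1 (hle.antisymm (hnrm.nonneg _)))

lemma measure_singleton_le_of_Wp_eq_zero (hnrm : IsNorm nrm) [IsFiniteMeasure Q]
    (hW : Wp nrm 1 Q P = 0) (v : Fin m → ℝ) : P {v} ≤ Q {v} := by
  have hball : ∀ η > 0, P {v} ≤ Q {u | nrm (u - v) ≤ η} := by
    intro η hη
    refine ENNReal.le_of_forall_pos_le_add fun δ hδ _ => ?_
    obtain ⟨π, hπ, hlt⟩ := exists_coupling_transportCost_lt (r := ENNReal.ofReal η * δ)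
      (by rw [hW]; exact ENNReal.mul_pos (by simpa using hη) (by simpa using hδ.ne'))
    refine (measure_singleton_le_add_of_coupling hnrm hπ v hη).trans ?_
    gcongr
    rw [ENNReal.div_le_iff (by simpa using hη) ENNReal.ofReal_ne_top, mul_comm]
    exact hlt.le
  have hlim : Tendsto (fun η => Q {u | nrm (u - v) ≤ η}) (𝓝[>] 0) (𝓝 (Q {v})) := by
    rw [← hnrm.iInter_closedBall_eq_singleton v]
    refine tendsto_measure_biInter_gt (fun η _ => ?_) (fun i j _ hij u hu => le_trans hu hij)
      ⟨1, one_pos, measure_ne_top _ _⟩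
    exact (measurableSet_le (hnrm.continuous.measurable.comp (measurable_id.sub_const v))
      measurable_const).nullMeasurableSet
  exact ge_of_tendsto hlim (eventually_nhdsWithin_of_forall hball)

lemma eq_of_Wp_eq_zero (hnrm : IsNorm nrm) [IsProbabilityMeasure Q] [IsProbabilityMeasure P]
    (T : Finset (Fin m → ℝ)) (hT : P (↑T)ᶜ = 0) (hW : Wp nrm 1 Q P = 0) : Q = P := by
  refine (Measure.eq_of_le_of_isProbabilityMeasure fun s => ?_).symm
  have hs : (↑(T.filter (· ∈ s)) : Set (Fin m → ℝ)) = s ∩ ↑T := by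
    ext x
    simp [and_comm]
  calc P s = ∑ v ∈ T.filter (· ∈ s), P {v} := by
        rw [sum_measure_singleton, hs, measure_inter_conull hT]
    _ ≤ ∑ v ∈ T.filter (· ∈ s), Q {v} :=
        Finset.sum_le_sum fun v _ => measure_singleton_le_of_Wp_eq_zero hnrm hW v
    _ ≤ Q s := by rw [sum_measure_singleton, hs]; exact measure_mono Set.inter_subset_left

end ZeroDistance

lemma _root_.ConvexOn.add_mul_sub_le_of_one_le {E : Type*} [AddCommGroup E] [Module ℝ E]
    {f : E → ℝ} (hf : ConvexOn ℝ Set.univ f) (u w : E) {c : ℝ} (hc : 1 ≤ c) :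
    f w + c * (f u - f w) ≤ f (w + c • (u - w)) := by
  have hc0 : 0 < c := one_pos.trans_le hc
  have hu : c⁻¹ • (w + c • (u - w)) + (1 - c⁻¹) • w = u := by
    rw [smul_add, smul_smul, inv_mul_cancel₀ hc0.ne', one_smul, sub_smul, one_smul]
    abel
  have h := hf.2 (Set.mem_univ (w + c • (u - w))) (Set.mem_univ w) (inv_nonneg.2 hc0.le)
    (sub_nonneg.2 (inv_le_one_of_one_le₀ hc)) (add_sub_cancel _ _)
  rw [hu, smul_eq_mul, smul_eq_mul] at h
  have hexpand : c * (c⁻¹ * f (w + c • (u - w)) + (1 - c⁻¹) * f w)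
      = f (w + c • (u - w)) + (c - 1) * f w := by
    field_simp
  linarith [mul_le_mul_of_nonneg_left h hc0.le]

section Mixture

variable {m : ℕ} {nrm : (Fin m → ℝ) → ℝ} {P : Measure (Fin m → ℝ)} {z : Fin m → ℝ} {t : ℝ}

lemma mix_mem_WBall (hnrm : IsNorm nrm) [IsProbabilityMeasure P] {ε : ℝ} (ht0 : 0 ≤ t)
    (ht1 : t ≤ 1) (hz : Integrable (fun x => nrm (z - x)) P)
    (hcost : ENNReal.ofReal (t * ∫ x, nrm (z - x) ∂P) ≤ ENNReal.ofReal ε) :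
    ENNReal.ofReal (1 - t) • P + ENNReal.ofReal t • Measure.dirac z
      ∈ WBall nrm 1 ε Set.univ P := by
  have hw : ENNReal.ofReal (1 - t) + ENNReal.ofReal t = 1 := by
    rw [← ENNReal.ofReal_add (by linarith) ht0]
    simp
  have hdiag : Measurable fun x : Fin m → ℝ => (x, x) := measurable_id.prodMk measurable_id
  set π := ENNReal.ofReal (1 - t) • P.map (fun x => (x, x))
    + ENNReal.ofReal t • (Measure.dirac z).prod P
  have hπ : π ∈ Couplings
      (ENNReal.ofReal (1 - t) • P + ENNReal.ofReal t • Measure.dirac z) P := by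
    refine ⟨⟨?_⟩, ?_, ?_⟩
    · simp [π, Measure.map_apply hdiag MeasurableSet.univ, hw]
    · rw [Measure.map_add _ _ measurable_fst, Measure.map_smul, Measure.map_smul,
        Measure.map_map measurable_fst hdiag, Measure.map_fst_prod]
      simp [Function.comp_def]
    · rw [Measure.map_add _ _ measurable_snd, Measure.map_smul, Measure.map_smul,
        Measure.map_map measurable_snd hdiag, Measure.map_snd_prod]
      simp [Function.comp_def, ← add_smul, hw]
  have hcostπ : transportCost nrm π = ENNReal.ofReal (t * ∫ x, nrm (z - x) ∂P) := by
    rw [ENNReal.ofReal_mul ht0, ofReal_integral_eq_lintegral_ofReal hz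
      (ae_of_all _ fun x => hnrm.nonneg _)]
    simp [π, transportCost, lintegral_map hnrm.measurable_cost.ennreal_ofReal hdiag,
      Measure.dirac_prod, hnrm.map_zero,
      lintegral_map hnrm.measurable_cost.ennreal_ofReal measurable_prodMk_left]
  refine ⟨⟨by simp [hw]⟩, by simp, ?_⟩
  rw [Wp_one_eq_iInf_transportCost]
  exact iInf₂_le_of_le π hπ (hcostπ ▸ hcost)

lemma integral_mix {ℓ : (Fin m → ℝ) → ℝ} (hℓP : Integrable ℓ P) (ht0 : 0 ≤ t) (ht1 : t ≤ 1) :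
    Integrable ℓ (ENNReal.ofReal (1 - t) • P + ENNReal.ofReal t • Measure.dirac z) ∧
      ∫ x, ℓ x ∂(ENNReal.ofReal (1 - t) • P + ENNReal.ofReal t • Measure.dirac z)
        = (1 - t) * ∫ x, ℓ x ∂P + t * ℓ z := by
  have h1 := hℓP.smul_measure (c := ENNReal.ofReal (1 - t)) ENNReal.ofReal_ne_top
  have h2 := (integrable_dirac (a := z) (f := ℓ) enorm_lt_top).smul_measure
    (c := ENNReal.ofReal t) ENNReal.ofReal_ne_top
  refine ⟨h1.add_measure h2, ?_⟩
  rw [integral_add_measure h1 h2, integral_smul_measure, integral_smul_measure, integral_dirac,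
    ENNReal.toReal_ofReal (by linarith), ENNReal.toReal_ofReal ht0, smul_eq_mul, smul_eq_mul]

end Mixture

section WorstCaseRisk

variable {m : ℕ} {nrm : (Fin m → ℝ) → ℝ} {P : Measure (Fin m → ℝ)} {ℓ : (Fin m → ℝ) → ℝ}
  {ε : ℝ}

lemma exists_mem_WBall_add_mul_le_integral (hnrm : IsNorm nrm) [IsProbabilityMeasure P]
    (hconv : ConvexOn ℝ Set.univ ℓ) (hℓP : Integrable ℓ P)
    (hmom : ∀ z, Integrable (fun x => nrm (z - x)) P) (hε : 0 ≤ ε) {u w : Fin m → ℝ}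
    (huw : u ≠ w) {g : ℝ} (hg : g < (ℓ u - ℓ w) / nrm (u - w)) :
    ∃ Q ∈ WBall nrm 1 ε Set.univ P, Integrable ℓ Q ∧ ∫ x, ℓ x ∂P + ε * g ≤ ∫ x, ℓ x ∂Q := by
  set E := ∫ x, ℓ x ∂P
  set K := ∫ x, nrm (w - x) ∂P
  have hK : 0 ≤ K := integral_nonneg fun x => hnrm.nonneg _
  have hd : 0 < nrm (u - w) := hnrm.pos (sub_ne_zero.2 huw)
  have hgap : 0 < ℓ u - ℓ w - g * nrm (u - w) := by
    rw [lt_div_iff₀ hd] at hg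
    linarith
  obtain ⟨c, hc1, hcε, hcgain⟩ : ∃ c : ℝ, 1 ≤ c ∧ ε ≤ c * nrm (u - w) + K ∧
      g * (c * nrm (u - w) + K) ≤ ℓ w - E + c * (ℓ u - ℓ w) := by
    have hD : Tendsto (fun c => c * nrm (u - w) + K) atTop atTop :=
      tendsto_atTop_add_const_right _ K (tendsto_id.atTop_mul_const hd)
    have hgain : Tendsto (fun c => c * (ℓ u - ℓ w - g * nrm (u - w)) + (ℓ w - E - g * K))
        atTop atTop :=
      tendsto_atTop_add_const_right _ _ (tendsto_id.atTop_mul_const hgap)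
    obtain ⟨c, h1, h2, h3⟩ := ((eventually_ge_atTop 1).and
      ((hD.eventually_ge_atTop ε).and (hgain.eventually_ge_atTop 0))).exists
    exact ⟨c, h1, h2, by linarith⟩
  set D := c * nrm (u - w) + K
  have hD : 0 < D := by positivity
  set z := w + c • (u - w)
  have hz : ∀ x, nrm (z - x) ≤ c * nrm (u - w) + nrm (w - x) := fun x => by
    calc nrm (z - x) = nrm (c • (u - w) + (w - x)) := by congr 1; simp only [z]; abel
      _ ≤ nrm (c • (u - w)) + nrm (w - x) := hnrm.triangle _ _
      _ = c * nrm (u - w) + nrm (w - x) := by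
        rw [hnrm.homog, abs_of_nonneg (zero_le_one.trans hc1)]
  have hcost : ε / D * ∫ x, nrm (z - x) ∂P ≤ ε := by
    calc ε / D * ∫ x, nrm (z - x) ∂P ≤ ε / D * D := by
          gcongr
          refine (integral_mono (hmom z) ((integrable_const _).add (hmom w)) hz).trans_eq ?_
          simp [integral_add (integrable_const _) (hmom w), D, K]
      _ = ε := div_mul_cancel₀ ε hD.ne'
  have ht0 : 0 ≤ ε / D := by positivity
  have ht1 : ε / D ≤ 1 := (div_le_one hD).2 hcε
  obtain ⟨hint, heq⟩ := integral_mix (z := z) hℓP ht0 ht1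
  refine ⟨_, mix_mem_WBall hnrm ht0 ht1 (hmom z) (ENNReal.ofReal_le_ofReal hcost), hint, ?_⟩
  have hℓz := hconv.add_mul_sub_le_of_one_le u w hc1
  calc E + ε * g = E + ε / D * (g * D) := by field_simp
    _ ≤ E + ε / D * (ℓ z - E) := by gcongr; linarith
    _ = (1 - ε / D) * E + ε / D * ℓ z := by ring
    _ = _ := heq.symm

lemma le_iSup_eexp_WBall (hnrm : IsNorm nrm) [IsProbabilityMeasure P]
    (hconv : ConvexOn ℝ Set.univ ℓ) (hℓP : Integrable ℓ P)
    (hmom : ∀ z, Integrable (fun x => nrm (z - x)) P) :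
    ((∫ x, ℓ x ∂P : ℝ) : EReal) + ennToE (ENNReal.ofReal ε * lipMod nrm ℓ)
      ≤ ⨆ Q : WBall nrm 1 ε Set.univ P, eexp Q.1 (fun x => ((ℓ x : ℝ) : EReal)) := by
  have hsup : ∀ Q ∈ WBall nrm 1 ε Set.univ P, Integrable ℓ Q →
      ((∫ x, ℓ x ∂Q : ℝ) : EReal) ≤ ⨆ Q : WBall nrm 1 ε Set.univ P,
        eexp Q.1 (fun x => ((ℓ x : ℝ) : EReal)) := fun Q hQ hint =>
    eexp_coe_of_integrable hint ▸ le_iSup_of_le ⟨Q, hQ⟩ le_rfl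
  have hP : P ∈ WBall nrm 1 ε Set.univ P := by
    simpa using mix_mem_WBall hnrm le_rfl zero_le_one (hmom 0) (by simp)
  rcases le_or_gt ε 0 with hε | hε
  · simpa [ENNReal.ofReal_of_nonpos hε, ennToE] using hsup P hP hℓP
  refine coe_add_ennToE_ofReal_mul_le hε (hsup P hP hℓP) fun g hg => ?_
  obtain ⟨u, w, huw, hslope⟩ := exists_lt_slope_of_ofReal_lt_lipMod hnrm hg
  obtain ⟨Q, hQ, hint, hle⟩ :=
    exists_mem_WBall_add_mul_le_integral hnrm hconv hℓP hmom hε.le huw hslope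
  exact (EReal.coe_le_coe_iff.2 hle).trans (hsup Q hQ hint)

lemma iSup_eexp_WBall_le (hnrm : IsNorm nrm) [IsProbabilityMeasure P] (T : Finset (Fin m → ℝ))
    (hT : P (↑T)ᶜ = 0) (hℓ : Measurable ℓ) (hℓP : Integrable ℓ P) :
    ⨆ Q : WBall nrm 1 ε Set.univ P, eexp Q.1 (fun x => ((ℓ x : ℝ) : EReal))
      ≤ ((∫ x, ℓ x ∂P : ℝ) : EReal) + ennToE (ENNReal.ofReal ε * lipMod nrm ℓ) := by
  refine iSup_le fun Q => ?_
  obtain ⟨hQ, -, hQW⟩ := Q.2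
  rcases le_or_gt ε 0 with hε | hε
  · have hW : Wp nrm 1 Q P = 0 :=
      le_zero_iff.1 (by simpa [ENNReal.ofReal_of_nonpos hε] using hQW)
    rw [eq_of_Wp_eq_zero hnrm T hT hW, eexp_coe_of_integrable hℓP]
    simp [ENNReal.ofReal_of_nonpos hε, ennToE]
  by_cases hL : lipMod nrm ℓ = ⊤
  · simp [hL, hε, ennToE]
  obtain ⟨hint, hle⟩ := integral_le_integral_add_of_mem_WBall hnrm hε.le Q.2 hℓ
    ENNReal.toReal_nonneg (abs_sub_le_lipMod_toReal_mul hnrm hL) hℓP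
  rw [eexp_coe_of_integrable hint, ennToE_eq_coe, EReal.coe_ennreal_mul,
    EReal.coe_ennreal_ofReal, max_eq_left hε.le, ← EReal.coe_ennreal_toReal hL, ← EReal.coe_mul,
    ← EReal.coe_add, EReal.coe_le_coe_iff]
  linarith

end WorstCaseRisk

theorem convex_loss_p_one_general {m N : ℕ} (hN : 0 < N)
    (nrm : (Fin m → ℝ) → ℝ) (hnrm : IsNorm nrm) (ε : ℝ)
    (xs : Fin N → (Fin m → ℝ)) (ℓ : (Fin m → ℝ) → ℝ)
    (hconv : ConvexOn ℝ Set.univ ℓ) :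
    (⨆ Q : (WBall nrm 1 ε (Set.univ : Set (Fin m → ℝ)) (empirical N xs)),
        eexp Q.1 (fun x => ((ℓ x : ℝ) : EReal))) =
      (((1 / (N : ℝ)) * ∑ i, ℓ (xs i) : ℝ) : EReal)
        + ennToE (ENNReal.ofReal ε * lipMod nrm ℓ) := by
  have := isProbabilityMeasure_empirical hN xs
  have hℓ : Continuous ℓ := continuousOn_univ.1 (hconv.continuousOn isOpen_univ)
  rw [one_div, ← integral_empirical]
  exact le_antisymm
    (iSup_eexp_WBall_le hnrm _ (empirical_compl_image_eq_zero xs) hℓ.measurable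
      (integrable_empirical hN xs))
    (le_iSup_eexp_WBall hnrm hconv (integrable_empirical hN xs)
      fun _ => integrable_empirical hN xs)

/-- **Convex loss and `p = 1`.** If `Ξ = ℝ^m`, the loss `ℓ` is convex and `P` is the
empirical distribution, then the worst-case risk over the type-1 Wasserstein ball equals
the Lipschitz-regularized empirical loss. -/
theorem convex_loss_p_one {m N : ℕ} (hN : 0 < N)
    (nrm : (Fin m → ℝ) → ℝ) (hnrm : IsNorm nrm) (ε : ℝ) (hε : 0 ≤ ε)
    (xs : Fin N → (Fin m → ℝ)) (ℓ : (Fin m → ℝ) → ℝ)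
    (hconv : ConvexOn ℝ Set.univ ℓ) :
    (⨆ Q : (WBall nrm 1 ε (Set.univ : Set (Fin m → ℝ)) (empirical N xs)),
        eexp Q.1 (fun x => ((ℓ x : ℝ) : EReal))) =
      (((1 / (N : ℝ)) * ∑ i, ℓ (xs i) : ℝ) : EReal)
        + ennToE (ENNReal.ofReal ε * lipMod nrm ℓ) :=
  convex_loss_p_one_general hN nrm hnrm ε xs ℓ hconv

end WDro
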